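/- Let x ∈ ℝ^m be nonnegative, V ∈ ℝ^{m×n} nonnegative with (VᵀV s)_j > 0 for every entrywise positive s ∈ ℝ^n and every j, and let s^{(0)} ∈ ℝ^n be entrywise strictly positive. Define s^{(t+1)}_j = s^{(t)}_j (Vᵀx)_j/(VᵀVs^{(t)})_j whenever s^{(t)} is entrywise positive (and s^{(t+1)}_j = 0 if s^{(t)}_j = 0, in which case it remains 0 forever). Then the sequence e_t = ‖x − V s^{(t)}‖² is non-increasing and hence converges. -/

import Mathlib

/-!
Lee–Seung argument. With `b = Vᵀx` and `c = VᵀVs`, the update is `s' = s + s ⊙ u` where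
`u j = b j / c j - 1`. Expanding, `‖x - Vs'‖² = ‖x - Vs‖² + 2⟪c - b, s ⊙ u⟫ + ‖V(s ⊙ u)‖²`, and
Cauchy–Schwarz bounds the last term by `∑ j, s j * c j * u j ^ 2`. The resulting separable
quadratic bound is minimized coordinatewise exactly by the update, where it equals
`-∑ j, s j * (b j - c j) ^ 2 / c j ≤ 0`. Hence the error does not increase along the (nonnegative)
iterates, and a non-increasing sequence bounded below by `0` converges.
-/

open Matrix Finset

lemma mulVec_nonneg_of_nonneg {R m n : Type*} [Semiring R] [PartialOrder R] [IsOrderedRing R]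
    [Fintype n] {A : Matrix m n R} (hA : ∀ i j, 0 ≤ A i j) {v : n → R} (hv : 0 ≤ v) : 0 ≤ A *ᵥ v :=
  fun i => dotProduct_nonneg_of_nonneg (fun j => hA i j) hv

variable {m n : Type*} [Fintype m] [Fintype n]

def reconstructionError (x : m → ℝ) (V : Matrix m n ℝ) (s : n → ℝ) : ℝ :=
  ∑ i, (x i - (V *ᵥ s) i) ^ 2

noncomputable def multiplicativeUpdate (x : m → ℝ) (V : Matrix m n ℝ) (s : n → ℝ) : n → ℝ :=
  fun j => s j * (Vᵀ *ᵥ x) j / (Vᵀ *ᵥ (V *ᵥ s)) j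

lemma multiplicativeUpdate_nonneg {x : m → ℝ} (hx : 0 ≤ x) {V : Matrix m n ℝ}
    (hV : ∀ i j, 0 ≤ V i j) {s : n → ℝ} (hs : 0 ≤ s) : 0 ≤ multiplicativeUpdate x V s :=
  fun j => div_nonneg (mul_nonneg (hs j) (mulVec_nonneg_of_nonneg (fun i j => hV j i) hx j))
    (mulVec_nonneg_of_nonneg (fun i j => hV j i) (mulVec_nonneg_of_nonneg hV hs) j)

lemma reconstructionError_add (x : m → ℝ) (V : Matrix m n ℝ) (s d : n → ℝ) :
    reconstructionError x V (s + d) = reconstructionError x V s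
      + 2 * ((Vᵀ *ᵥ (V *ᵥ s) - Vᵀ *ᵥ x) ⬝ᵥ d) + ∑ i, (V *ᵥ d) i ^ 2 := by
  have hcross : ∑ i, ((V *ᵥ s) i - x i) * (V *ᵥ d) i = (Vᵀ *ᵥ (V *ᵥ s) - Vᵀ *ᵥ x) ⬝ᵥ d := by
    rw [← mulVec_sub, mulVec_transpose, ← dotProduct_mulVec]
    rfl
  rw [← hcross, reconstructionError, reconstructionError, mul_sum, ← sum_add_distrib,
    ← sum_add_distrib, mulVec_add]
  exact sum_congr rfl fun i _ => by simp only [Pi.add_apply]; ring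

/-- Row-wise Cauchy–Schwarz with weights `V i j * s j`: the Lee–Seung auxiliary-function bound. -/
lemma sum_mulVec_mul_sq_le {V : Matrix m n ℝ} (hV : ∀ i j, 0 ≤ V i j) {s : n → ℝ} (hs : 0 ≤ s)
    (u : n → ℝ) : ∑ i, (V *ᵥ (s * u)) i ^ 2 ≤ (Vᵀ *ᵥ (V *ᵥ s)) ⬝ᵥ (s * u ^ 2) :=
  calc ∑ i, (V *ᵥ (s * u)) i ^ 2 ≤ ∑ i, (V *ᵥ s) i * (V *ᵥ (s * u ^ 2)) i :=
        sum_le_sum fun i _ => sum_sq_le_sum_mul_sum_of_sq_le_mul _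
          (f := fun j => V i j * s j) (g := fun j => V i j * (s j * u j ^ 2))
          (fun j _ => mul_nonneg (hV i j) (hs j))
          (fun j _ => mul_nonneg (hV i j) (mul_nonneg (hs j) (sq_nonneg (u j))))
          (fun j _ => le_of_eq (by simp only [Pi.mul_apply]; ring))
    _ = (Vᵀ *ᵥ (V *ᵥ s)) ⬝ᵥ (s * u ^ 2) := by
        rw [mulVec_transpose, ← dotProduct_mulVec]
        rfl

/-- Since `s j * (Vᵀ *ᵥ (V *ᵥ s)) j ≥ ∑ i, (V i j * s j) ^ 2`, its vanishing forces `s j` to kill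
column `j` of `V`. -/
lemma mul_transpose_mulVec_eq_zero_of_mul_eq_zero {V : Matrix m n ℝ} (hV : ∀ i j, 0 ≤ V i j)
    {s : n → ℝ} (hs : 0 ≤ s) (x : m → ℝ) {j : n} (h : s j * (Vᵀ *ᵥ (V *ᵥ s)) j = 0) :
    s j * (Vᵀ *ᵥ x) j = 0 := by
  have hexpand (w : m → ℝ) : s j * (Vᵀ *ᵥ w) j = ∑ i, V i j * s j * w i := by
    simp only [mulVec, dotProduct, transpose_apply, mul_sum]
    exact sum_congr rfl fun i _ => by ring
  have hterm (i : m) : (V i j * s j) ^ 2 ≤ V i j * s j * (V *ᵥ s) i := by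
    rw [sq]
    exact mul_le_mul_of_nonneg_left
      (single_le_sum (fun k _ => mul_nonneg (hV i k) (hs k)) (mem_univ j))
      (mul_nonneg (hV i j) (hs j))
  have hsum := (sum_eq_zero_iff_of_nonneg fun i _ => (sq_nonneg _).trans (hterm i)).1
    (hexpand _ ▸ h)
  have hcol (i : m) : V i j * s j = 0 :=
    pow_eq_zero_iff two_ne_zero |>.1 <|
      le_antisymm ((hterm i).trans_eq (hsum i (mem_univ i))) (sq_nonneg _)
  simp [hexpand, hcol]

/-- `u = b / c - 1` minimizes `2 * (c - b) * u + c * u ^ 2`; when `c = 0` it is `-1`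
(as `b / 0 = 0`), which is why `s * b = 0` is needed there. -/
lemma mul_quadratic_at_div_sub_one_nonpos {s b c : ℝ} (hs : 0 ≤ s) (hc : 0 ≤ c)
    (hsc : s * c = 0 → s * b = 0) :
    s * (2 * (c - b) * (b / c - 1) + c * (b / c - 1) ^ 2) ≤ 0 := by
  rcases hc.eq_or_lt with rfl | hc
  · have hsb : s * b = 0 := hsc (mul_zero s)
    simp
    linarith
  · have hmin : 2 * (c - b) * (b / c - 1) + c * (b / c - 1) ^ 2 = -((b - c) ^ 2 / c) := by
      field_simp
      ring
    rw [hmin]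
    exact mul_nonpos_of_nonneg_of_nonpos hs (neg_nonpos.2 (by positivity))

theorem reconstructionError_multiplicativeUpdate_le (x : m → ℝ) {V : Matrix m n ℝ}
    (hV : ∀ i j, 0 ≤ V i j) {s : n → ℝ} (hs : 0 ≤ s) :
    reconstructionError x V (multiplicativeUpdate x V s) ≤ reconstructionError x V s := by
  set b := Vᵀ *ᵥ x
  set c := Vᵀ *ᵥ (V *ᵥ s)
  set u : n → ℝ := fun j => b j / c j - 1
  have hupdate : multiplicativeUpdate x V s = s + s * u := by
    ext j
    simp only [multiplicativeUpdate, Pi.add_apply, Pi.mul_apply, u]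
    ring
  have hc : 0 ≤ c := mulVec_nonneg_of_nonneg (fun i j => hV j i) (mulVec_nonneg_of_nonneg hV hs)
  have hcoord (j : n) : s j * (2 * (c j - b j) * u j + c j * u j ^ 2) ≤ 0 :=
    mul_quadratic_at_div_sub_one_nonpos (hs j) (hc j)
      (mul_transpose_mulVec_eq_zero_of_mul_eq_zero hV hs x)
  calc reconstructionError x V (multiplicativeUpdate x V s)
      = reconstructionError x V s + 2 * ((c - b) ⬝ᵥ (s * u)) + ∑ i, (V *ᵥ (s * u)) i ^ 2 := by
        rw [hupdate, reconstructionError_add]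
    _ ≤ reconstructionError x V s + 2 * ((c - b) ⬝ᵥ (s * u)) + c ⬝ᵥ (s * u ^ 2) := by
        gcongr
        exact sum_mulVec_mul_sq_le hV hs u
    _ = reconstructionError x V s + ∑ j, s j * (2 * (c j - b j) * u j + c j * u j ^ 2) := by
        simp only [dotProduct, mul_sum, add_assoc, ← sum_add_distrib]
        congr 1
        exact sum_congr rfl fun j _ => by
          simp only [Pi.sub_apply, Pi.mul_apply, Pi.pow_apply]
          ring
    _ ≤ reconstructionError x V s := add_le_of_nonpos_right (sum_nonpos fun j _ => hcoord j)

theorem error_sequence_converges_general (m n : ℕ)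
    (x : Fin m → ℝ) (hx : ∀ i, 0 ≤ x i)
    (V : Matrix (Fin m) (Fin n) ℝ) (hV : ∀ i j, 0 ≤ V i j)
    (s : ℕ → Fin n → ℝ) (hs0 : ∀ j, 0 < s 0 j)
    (hrec : ∀ t j, s (t + 1) j =
      s t j * (Vᵀ.mulVec x j) / (Vᵀ.mulVec (V.mulVec (s t)) j))
    (e : ℕ → ℝ)
    (he : ∀ t, e t = ∑ i, (x i - V.mulVec (s t) i) ^ 2) :
    (∀ t, e (t + 1) ≤ e t) ∧ ∃ L : ℝ, Filter.Tendsto e Filter.atTop (nhds L) := by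
  have hstep (t : ℕ) : s (t + 1) = multiplicativeUpdate x V (s t) := funext (hrec t)
  have hnonneg (t : ℕ) : 0 ≤ s t := by
    induction t with
    | zero => exact fun j => (hs0 j).le
    | succ t ih => exact hstep t ▸ multiplicativeUpdate_nonneg hx hV ih
  have hanti (t : ℕ) : e (t + 1) ≤ e t := by
    rw [he, he, hstep]
    exact reconstructionError_multiplicativeUpdate_le x hV (hnonneg t)
  refine ⟨hanti, _, tendsto_atTop_ciInf (antitone_nat_of_succ_le hanti) ⟨0, ?_⟩⟩
  rintro _ ⟨t, rfl⟩
  rw [he]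
  positivity

theorem error_sequence_converges (m n : ℕ)
    (x : Fin m → ℝ) (hx : ∀ i, 0 ≤ x i)
    (V : Matrix (Fin m) (Fin n) ℝ) (hV : ∀ i j, 0 ≤ V i j)
    (hpos : ∀ s : Fin n → ℝ, (∀ j, 0 < s j) → ∀ j, 0 < Vᵀ.mulVec (V.mulVec s) j)
    (s : ℕ → Fin n → ℝ) (hs0 : ∀ j, 0 < s 0 j)
    (hrec : ∀ t j, s (t + 1) j =
      s t j * (Vᵀ.mulVec x j) / (Vᵀ.mulVec (V.mulVec (s t)) j))
    (e : ℕ → ℝ)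
    (he : ∀ t, e t = ∑ i, (x i - V.mulVec (s t) i) ^ 2) :
    (∀ t, e (t + 1) ≤ e t) ∧ ∃ L : ℝ, Filter.Tendsto e Filter.atTop (nhds L) :=
  error_sequence_converges_general m n x hx V hV s hs0 hrec e he
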